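/- arXiv:2007.01933 — 6 statements merged into one kernel-verified Lean document; each statement's English description precedes it below -/
import Mathlib

section
/- Let ε > 0 and k ∈ ℕ with 2^{-k} < ε/4. Then the set {x ∈ 2^{-k}ℤ² : |x| > ε and there exists y ∈ 2^{-k}ℤ² with |y| ≤ ε and |x − y| = 2^{-k}} is finite and has cardinality at most 56·ε·2^{k} + 28. -/
/-- A point of the square lattice `2^{-k}ℤ²` in the plane. -/
def IsLatticePoint (k : ℕ) (x : EuclideanSpace ℝ (Fin 2)) : Prop :=
  ∃ a b : ℤ, x 0 = (2 : ℝ) ^ (-(k : ℤ)) * a ∧ x 1 = (2 : ℝ) ^ (-(k : ℤ)) * b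

/-- The lattice points outside the closed disc `B_ε` that are adjacent (in the lattice
`2^{-k}ℤ²`) to a lattice point inside `B_ε`, i.e. the lattice neighbors of the darning
point `a*_k`. -/
def darningNeighbors (ε : ℝ) (k : ℕ) : Set (EuclideanSpace ℝ (Fin 2)) :=
  {x | IsLatticePoint k x ∧ ε < ‖x‖ ∧
    ∃ y : EuclideanSpace ℝ (Fin 2),
      IsLatticePoint k y ∧ ‖y‖ ≤ ε ∧ ‖x - y‖ = (2 : ℝ) ^ (-(k : ℤ))}

/-!
Rescaling by `2^k`, a darning neighbour becomes an integer point `(a, b)` with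
`N < ‖(a, b)‖ ≤ N + 1`, where `N = ε 2^k`. In such a unit-width annulus, a point with
`|a| ≤ |b|` has `|b| > N / √2`, so `|b|` is pinned to `⌊√((N + 1)² - a²)⌋` or the integer
below it: each of the `≤ 2N + 3` columns contains at most four such points.
Swapping coordinates covers the points with `|b| ≤ |a|`, for `16N + 24` points in all.
-/

open Finset Pointwise

def intAnnulus (N : ℝ) : Set (ℤ × ℤ) :=
  {p | N ^ 2 < (p.1 : ℝ) ^ 2 + (p.2 : ℝ) ^ 2 ∧ (p.1 : ℝ) ^ 2 + (p.2 : ℝ) ^ 2 ≤ (N + 1) ^ 2}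

lemma swap_mem_intAnnulus {N : ℝ} {p : ℤ × ℤ} (hp : p ∈ intAnnulus N) :
    p.swap ∈ intAnnulus N := by
  simpa only [intAnnulus, Set.mem_ofPred_eq, Prod.fst_swap, Prod.snd_swap, add_comm] using hp

noncomputable def columnTop (N : ℝ) (a : ℤ) : ℤ :=
  ⌊√((N + 1) ^ 2 - (a : ℝ) ^ 2)⌋

lemma abs_mem_Icc_columnTop {N : ℝ} {a b : ℤ} (hp : (a, b) ∈ intAnnulus N) (hab : |a| ≤ |b|) :
    |b| ∈ Icc (columnTop N a - 1) (columnTop N a) := by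
  obtain ⟨hlow, hhigh⟩ := hp
  set c : ℝ := ((|b| : ℤ) : ℝ)
  have hc : 0 ≤ c := by positivity
  have hc2 : c ^ 2 = (b : ℝ) ^ 2 := by simp only [c, Int.cast_abs, sq_abs]
  have hac : (a : ℝ) ^ 2 ≤ c ^ 2 := by
    rw [← sq_abs (a : ℝ), ← Int.cast_abs]
    exact pow_le_pow_left₀ (by positivity) (Int.cast_le.mpr hab) 2
  have hle : c ≤ √((N + 1) ^ 2 - (a : ℝ) ^ 2) := Real.le_sqrt_of_sq_le (by linarith)
  -- `c > N / √2 ≥ (N - 1) / 2`, so along the column the annulus is less than `2` wide.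
  have hN : 2 * N ≤ 4 * c + 2 := by nlinarith
  have hlt : √((N + 1) ^ 2 - (a : ℝ) ^ 2) < c + 2 := by
    rw [Real.sqrt_lt' (by linarith)]
    nlinarith
  have hfloor : columnTop N a < |b| + 2 := by
    rw [columnTop, Int.floor_lt, Int.cast_add, Int.cast_two]
    exact hlt
  exact mem_Icc.mpr ⟨by omega, Int.le_floor.mpr hle⟩

noncomputable def steepCover (N : ℝ) : Finset (ℤ × ℤ) :=
  (Icc (-(⌊N⌋ + 1)) (⌊N⌋ + 1)).biUnion fun a =>
    {a} ×ˢ (Icc (columnTop N a - 1) (columnTop N a) ∪ -Icc (columnTop N a - 1) (columnTop N a))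

lemma mem_steepCover {N : ℝ} {p : ℤ × ℤ} (hp : p ∈ intAnnulus N) (h : |p.1| ≤ |p.2|) :
    p ∈ steepCover N := by
  obtain ⟨a, b⟩ := p
  have hcol := abs_mem_Icc_columnTop hp h
  obtain ⟨hlow, hhigh⟩ := hp
  have ha : |(a : ℝ)| ≤ N + 1 :=
    abs_le_of_sq_le_sq (by nlinarith [sq_nonneg (b : ℝ)]) (by nlinarith [sq_nonneg (b : ℝ)])
  have ha' : |a| ≤ ⌊N⌋ + 1 := by
    have : |a| - 1 ≤ ⌊N⌋ := Int.le_floor.mpr (by push_cast; linarith)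
    omega
  refine mem_biUnion.mpr ⟨a, mem_Icc.mpr (abs_le.mp ha'),
    mem_product.mpr ⟨mem_singleton_self a, ?_⟩⟩
  rcases abs_choice b with hb | hb <;> rw [hb] at hcol
  · exact mem_union_left _ hcol
  · exact mem_union_right _ (mem_neg.mpr ⟨-b, hcol, neg_neg b⟩)

lemma card_steepCover_le {N : ℝ} (hN : 0 ≤ N) : ((steepCover N).card : ℝ) ≤ 8 * N + 12 := by
  have hcol : ∀ a, (Icc (columnTop N a - 1) (columnTop N a) ∪
      -Icc (columnTop N a - 1) (columnTop N a)).card ≤ 4 := fun a => by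
    refine (card_union_le _ _).trans ?_
    rw [card_neg, Int.card_Icc]
    omega
  have hrows : ((Icc (-(⌊N⌋ + 1)) (⌊N⌋ + 1)).card : ℝ) ≤ 2 * N + 3 := by
    have h0 : 0 ≤ ⌊N⌋ := Int.floor_nonneg.mpr hN
    rw [Int.card_Icc, ← Int.cast_natCast, Int.toNat_of_nonneg (by omega)]
    push_cast
    linarith [Int.floor_le N]
  calc ((steepCover N).card : ℝ) ≤ ((Icc (-(⌊N⌋ + 1)) (⌊N⌋ + 1)).card * 4 : ℕ) := by
        refine Nat.cast_le.mpr (card_biUnion_le_card_mul _ _ 4 fun a _ => ?_)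
        rw [card_product, card_singleton, one_mul]
        exact hcol a
    _ ≤ 8 * N + 12 := by push_cast; linarith

noncomputable def annulusCover (N : ℝ) : Finset (ℤ × ℤ) :=
  steepCover N ∪ (steepCover N).image Prod.swap

lemma intAnnulus_subset_annulusCover (N : ℝ) : intAnnulus N ⊆ annulusCover N := by
  intro p hp
  rw [annulusCover, coe_union, coe_image]
  rcases le_total |p.1| |p.2| with h | h
  · exact .inl (mem_steepCover hp h)
  · exact .inr ⟨p.swap, mem_steepCover (swap_mem_intAnnulus hp) h, p.swap_swap⟩

lemma card_annulusCover_le {N : ℝ} (hN : 0 ≤ N) : ((annulusCover N).card : ℝ) ≤ 16 * N + 24 := by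
  have h : (annulusCover N).card ≤ (steepCover N).card + (steepCover N).card :=
    (card_union_le _ _).trans (Nat.add_le_add_left card_image_le _)
  calc ((annulusCover N).card : ℝ) ≤ (steepCover N).card + (steepCover N).card := by
        exact_mod_cast h
    _ ≤ 16 * N + 24 := by linarith [card_steepCover_le hN]

noncomputable def latticeEmbedding (k : ℕ) (p : ℤ × ℤ) : EuclideanSpace ℝ (Fin 2) :=
  (2 : ℝ) ^ (-(k : ℤ)) • !₂[(p.1 : ℝ), p.2]

lemma IsLatticePoint.exists_latticeEmbedding_eq {k : ℕ} {x : EuclideanSpace ℝ (Fin 2)}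
    (hx : IsLatticePoint k x) : ∃ p, latticeEmbedding k p = x := by
  obtain ⟨a, b, ha, hb⟩ := hx
  refine ⟨(a, b), ?_⟩
  ext i
  fin_cases i <;> simp [latticeEmbedding, ha, hb]

lemma norm_latticeEmbedding (k : ℕ) (p : ℤ × ℤ) :
    ‖latticeEmbedding k p‖ = (2 : ℝ) ^ (-(k : ℤ)) * √((p.1 : ℝ) ^ 2 + (p.2 : ℝ) ^ 2) := by
  rw [latticeEmbedding, norm_smul, EuclideanSpace.norm_eq, Fin.sum_univ_two]
  simp

lemma darningNeighbors_subset_image_intAnnulus {ε : ℝ} (hε : 0 < ε) (k : ℕ) :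
    darningNeighbors ε k ⊆ latticeEmbedding k '' intAnnulus (ε * 2 ^ k) := by
  rintro x ⟨hx, hεx, y, -, hy, hxy⟩
  obtain ⟨p, rfl⟩ := hx.exists_latticeEmbedding_eq
  have hx_le : ‖latticeEmbedding k p‖ ≤ ε + (2 : ℝ) ^ (-(k : ℤ)) := by
    calc _ ≤ ‖y‖ + ‖latticeEmbedding k p - y‖ := norm_le_norm_add_norm_sub' _ _
      _ ≤ _ := by rw [hxy]; linarith
  rw [norm_latticeEmbedding] at hεx hx_le
  have h2k : (2 : ℝ) ^ (-(k : ℤ)) * 2 ^ k = 1 := by simp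
  have hpos : (0 : ℝ) < 2 ^ k := by positivity
  refine ⟨p, ⟨(Real.lt_sqrt (by positivity)).mp ?_, (Real.sqrt_le_left (by positivity)).mp ?_⟩, rfl⟩
  · nlinarith
  · nlinarith

theorem card_darningNeighbors_le_general (ε : ℝ) (hε : 0 < ε) (k : ℕ) :
    (darningNeighbors ε k).Finite ∧
      ((darningNeighbors ε k).ncard : ℝ) ≤ 56 * ε * 2 ^ k + 28 := by
  set N := ε * 2 ^ k
  have hsub : darningNeighbors ε k ⊆ ((annulusCover N).image (latticeEmbedding k) : Set _) := by
    rw [coe_image]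
    exact (darningNeighbors_subset_image_intAnnulus hε k).trans
      (Set.image_mono (intAnnulus_subset_annulusCover N))
  have hcard : (darningNeighbors ε k).ncard ≤ (annulusCover N).card :=
    ((Set.ncard_le_ncard hsub (finite_toSet _)).trans_eq (Set.ncard_coe_finset _)).trans
      card_image_le
  refine ⟨(finite_toSet _).subset hsub, ?_⟩
  have hN : 0 ≤ N := by positivity
  calc ((darningNeighbors ε k).ncard : ℝ) ≤ (annulusCover N).card := by exact_mod_cast hcard
    _ ≤ 16 * N + 24 := card_annulusCover_le hN
    _ ≤ 56 * ε * 2 ^ k + 28 := by linarith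

/-- For `ε > 0` and `2^{-k} < ε/4`, the set of lattice neighbors of the
darning point is finite with at most `56·ε·2^k + 28` elements. -/
theorem card_darningNeighbors_le (ε : ℝ) (hε : 0 < ε) (k : ℕ)
    (hk : (2 : ℝ) ^ (-(k : ℤ)) < ε / 4) :
    (darningNeighbors ε k).Finite ∧
      ((darningNeighbors ε k).ncard : ℝ) ≤ 56 * ε * 2 ^ k + 28 :=
  card_darningNeighbors_le_general ε hε k
end

section
/- Let ε > 0 and k ∈ ℕ with 2^{-k} < ε/4. For all x, y ∈ ℝ² with |x| ≥ ε, |y| ≥ ε and |x − y| ≤ 2^{-k}, both coordinates of F_ε(x) − F_ε(y) have absolute value at most 9·2^{-k}; in fact |F_ε(x)_i − F_ε(y)_i| ≤ 3·2^{-k} for i = 1, 2. -/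
/-!
Away from the origin, `F_ε x = x - ε • (‖x‖⁻¹ • x)`. The normalisation `x ↦ ‖x‖⁻¹ • x` changes by
at most `2 ‖x - y‖ / ‖x‖`, and `ε / ‖x‖ ≤ 1`, so `F_ε` is `3`-Lipschitz on `{‖x‖ ≥ ε}`;
coordinates of a Euclidean vector are bounded by its norm.
-/

/-- The projection map `F_ε(x) = ((|x| − ε)/|x|)·x`, defined on `{x ∈ ℝ² : |x| ≥ ε}`,
used to embed the plane component of the space of varying dimension into `ℝ³`. -/
noncomputable def Fmap (ε : ℝ) (x : EuclideanSpace ℝ (Fin 2)) : EuclideanSpace ℝ (Fin 2) :=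
  ((‖x‖ - ε) / ‖x‖) • x

section Normalization

variable {E : Type*} [SeminormedAddCommGroup E] [NormedSpace ℝ E]

theorem norm_inv_norm_smul_sub_inv_norm_smul_le {x y : E} (hx : 0 < ‖x‖) (hy : 0 < ‖y‖) :
    ‖‖x‖⁻¹ • x - ‖y‖⁻¹ • y‖ ≤ 2 * ‖x - y‖ / ‖x‖ := by
  have hnorms : |‖y‖ - ‖x‖| ≤ ‖x - y‖ := by
    rw [norm_sub_rev x y]; exact abs_norm_sub_norm_le y x
  calc ‖‖x‖⁻¹ • x - ‖y‖⁻¹ • y‖ = ‖‖x‖⁻¹ • (x - y) + (‖x‖⁻¹ - ‖y‖⁻¹) • y‖ := by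
        congr 1; module
    _ ≤ ‖x‖⁻¹ * ‖x - y‖ + |‖x‖⁻¹ - ‖y‖⁻¹| * ‖y‖ := by
        refine (norm_add_le _ _).trans_eq ?_
        rw [norm_smul, norm_smul, Real.norm_eq_abs, Real.norm_eq_abs, abs_inv, abs_norm]
    _ = (‖x - y‖ + |‖y‖ - ‖x‖|) / ‖x‖ := by
        rw [inv_sub_inv hx.ne' hy.ne', abs_div, abs_mul, abs_norm, abs_norm]
        field_simp
    _ ≤ 2 * ‖x - y‖ / ‖x‖ := by gcongr; linarith

theorem norm_shrink_sub_shrink_le {ε : ℝ} (hε : 0 < ε) {x y : E} (hx : ε ≤ ‖x‖) (hy : ε ≤ ‖y‖) :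
    ‖((‖x‖ - ε) / ‖x‖) • x - ((‖y‖ - ε) / ‖y‖) • y‖ ≤ 3 * ‖x - y‖ := by
  have hx₀ : 0 < ‖x‖ := hε.trans_le hx
  have hy₀ : 0 < ‖y‖ := hε.trans_le hy
  have hεx : ε / ‖x‖ ≤ 1 := (div_le_one hx₀).2 hx
  calc ‖((‖x‖ - ε) / ‖x‖) • x - ((‖y‖ - ε) / ‖y‖) • y‖
        = ‖(x - y) - ε • (‖x‖⁻¹ • x - ‖y‖⁻¹ • y)‖ := by
        rw [sub_div, sub_div, div_self hx₀.ne', div_self hy₀.ne', div_eq_mul_inv, div_eq_mul_inv]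
        congr 1; module
    _ ≤ ‖x - y‖ + ε * (2 * ‖x - y‖ / ‖x‖) := by
        refine (norm_sub_le _ _).trans ?_
        rw [norm_smul, Real.norm_of_nonneg hε.le]
        gcongr
        exact norm_inv_norm_smul_sub_inv_norm_smul_le hx₀ hy₀
    _ = ‖x - y‖ + 2 * (ε / ‖x‖) * ‖x - y‖ := by ring
    _ ≤ 3 * ‖x - y‖ := by nlinarith [norm_nonneg (x - y)]

end Normalization

theorem coord_diff_Fmap_le_general (ε : ℝ) (hε : 0 < ε) (k : ℕ)
    (x y : EuclideanSpace ℝ (Fin 2))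
    (hx : ε ≤ ‖x‖) (hy : ε ≤ ‖y‖) (hxy : ‖x - y‖ ≤ (2 : ℝ) ^ (-(k : ℤ))) :
    ∀ i : Fin 2,
      |Fmap ε x i - Fmap ε y i| ≤ 3 * (2 : ℝ) ^ (-(k : ℤ)) ∧
        |Fmap ε x i - Fmap ε y i| ≤ 9 * (2 : ℝ) ^ (-(k : ℤ)) := by
  intro i
  have hcoord : |Fmap ε x i - Fmap ε y i| ≤ 3 * (2 : ℝ) ^ (-(k : ℤ)) :=
    calc |Fmap ε x i - Fmap ε y i| = dist (Fmap ε x i) (Fmap ε y i) := (Real.dist_eq _ _).symm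
      _ ≤ dist (Fmap ε x) (Fmap ε y) := PiLp.dist_apply_le _ _ _
      _ ≤ 3 * ‖x - y‖ := by rw [dist_eq_norm]; exact norm_shrink_sub_shrink_le hε hx hy
      _ ≤ 3 * (2 : ℝ) ^ (-(k : ℤ)) := by gcongr
  exact ⟨hcoord, hcoord.trans (by gcongr; norm_num)⟩

/-- If `|x|, |y| ≥ ε` and `|x − y| ≤ 2^{-k}` with `2^{-k} < ε/4`, then
each coordinate of `F_ε(x) − F_ε(y)` has absolute value at most `3·2^{-k}`, and in
particular at most `9·2^{-k}`. -/
theorem coord_diff_Fmap_le (ε : ℝ) (hε : 0 < ε) (k : ℕ)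
    (hk : (2 : ℝ) ^ (-(k : ℤ)) < ε / 4) (x y : EuclideanSpace ℝ (Fin 2))
    (hx : ε ≤ ‖x‖) (hy : ε ≤ ‖y‖) (hxy : ‖x - y‖ ≤ (2 : ℝ) ^ (-(k : ℤ))) :
    ∀ i : Fin 2,
      |Fmap ε x i - Fmap ε y i| ≤ 3 * (2 : ℝ) ^ (-(k : ℤ)) ∧
        |Fmap ε x i - Fmap ε y i| ≤ 9 * (2 : ℝ) ^ (-(k : ℤ)) :=
  coord_diff_Fmap_le_general ε hε k x y hx hy hxy
end

section
/- Let ε > 0 and let x, y ∈ ℝ² satisfy |x| ≥ ε, |y| ≥ ε and 0 < ⟨x, y⟩/(|x|·|y|) ≤ 3/4 (where ⟨·,·⟩ is the Euclidean inner product). Then ‖F_ε(x) − F_ε(y)‖ ≥ ρ(x, y)/8. -/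
/-!
`F_ε` moves every point radially to distance `s = |x| - ε` from the origin, so by the law of
cosines `‖F_ε x - F_ε y‖² = s² + t² - 2 s t cos θ`. For `cos θ ≤ 3/4` this is at least
`s² + t² - (3/2) s t ≥ (s + t)² / 64`, and `s + t` is the second term of the minimum defining `ρ`.
-/

open scoped RealInnerProductSpace

theorem norm_smul_div_norm_sub_smul_div_norm_sq {E : Type*} [NormedAddCommGroup E]
    [InnerProductSpace ℝ E] {x y : E} (hx : x ≠ 0) (hy : y ≠ 0) (s t : ℝ) :
    ‖(s / ‖x‖) • x - (t / ‖y‖) • y‖ ^ 2 = s ^ 2 + t ^ 2 - 2 * s * t * (⟪x, y⟫ / (‖x‖ * ‖y‖)) := by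
  have hx0 : ‖x‖ ≠ 0 := norm_ne_zero_iff.mpr hx
  have hy0 : ‖y‖ ≠ 0 := norm_ne_zero_iff.mpr hy
  rw [norm_sub_sq_real, norm_smul, norm_smul, real_inner_smul_left, real_inner_smul_right,
    Real.norm_eq_abs, Real.norm_eq_abs, abs_div, abs_div, abs_norm, abs_norm]
  field_simp
  rw [sq_abs, sq_abs]
  ring

theorem sq_add_div_eight_le_of_le_three_quarters {s t c : ℝ} (hs : 0 ≤ s) (ht : 0 ≤ t)
    (hc : c ≤ 3 / 4) : ((s + t) / 8) ^ 2 ≤ s ^ 2 + t ^ 2 - 2 * s * t * c := by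
  have hst : s * t * c ≤ s * t * (3 / 4) := mul_le_mul_of_nonneg_left hc (mul_nonneg hs ht)
  nlinarith [sq_nonneg (s - t), mul_nonneg hs ht]

theorem Fmap_diff_ge_of_cos_le_general (ε : ℝ) (hε : 0 < ε)
    (x y : EuclideanSpace ℝ (Fin 2)) (hx : ε ≤ ‖x‖) (hy : ε ≤ ‖y‖)
    (hcos_le : ⟪x, y⟫ / (‖x‖ * ‖y‖) ≤ 3 / 4) :
    min ‖x - y‖ ((‖x‖ - ε) + (‖y‖ - ε)) / 8 ≤ ‖Fmap ε x - Fmap ε y‖ := by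
  have hx0 : x ≠ 0 := norm_pos_iff.mp (hε.trans_le hx)
  have hy0 : y ≠ 0 := norm_pos_iff.mp (hε.trans_le hy)
  have key := sq_add_div_eight_le_of_le_three_quarters (sub_nonneg.mpr hx) (sub_nonneg.mpr hy)
    hcos_le
  rw [← norm_smul_div_norm_sub_smul_div_norm_sq hx0 hy0] at key
  calc min ‖x - y‖ ((‖x‖ - ε) + (‖y‖ - ε)) / 8 ≤ ((‖x‖ - ε) + (‖y‖ - ε)) / 8 := by
        gcongr; exact min_le_right _ _
    _ ≤ ‖Fmap ε x - Fmap ε y‖ := le_of_sq_le_sq key (norm_nonneg _)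

/-- If `|x|, |y| ≥ ε` and `0 < ⟨x, y⟩/(|x|·|y|) ≤ 3/4`, then
`‖F_ε(x) − F_ε(y)‖ ≥ ρ(x, y)/8`, where
`ρ(x, y) = min(|x − y|, (|x| − ε) + (|y| − ε))`. -/
theorem Fmap_diff_ge_of_cos_le (ε : ℝ) (hε : 0 < ε)
    (x y : EuclideanSpace ℝ (Fin 2)) (hx : ε ≤ ‖x‖) (hy : ε ≤ ‖y‖)
    (hcos_pos : 0 < ⟪x, y⟫ / (‖x‖ * ‖y‖)) (hcos_le : ⟪x, y⟫ / (‖x‖ * ‖y‖) ≤ 3 / 4) :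
    min ‖x - y‖ ((‖x‖ - ε) + (‖y‖ - ε)) / 8 ≤ ‖Fmap ε x - Fmap ε y‖ :=
  Fmap_diff_ge_of_cos_le_general ε hε x y hx hy hcos_le
end

section
/- Let ε > 0 and let x, y ∈ ℝ² satisfy |x| ≥ ε, |y| ≥ ε, ⟨x, y⟩/(|x|·|y|) > 3/4 and |x| + |y| ≥ 8ε (where ⟨·,·⟩ is the Euclidean inner product). Then ρ(x, y)² ≤ 8·‖F_ε(x) − F_ε(y)‖². -/
open scoped RealInnerProductSpace

section InnerProductSpace

variable {E : Type*} [NormedAddCommGroup E] [InnerProductSpace ℝ E]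

theorem norm_smul_sub_smul_sq {x y : E} (hx : x ≠ 0) (hy : y ≠ 0) (s t : ℝ) :
    ‖s • x - t • y‖ ^ 2 = (s * ‖x‖ - t * ‖y‖) ^ 2
      + 2 * (s * ‖x‖) * (t * ‖y‖) * (1 - ⟪x, y⟫ / (‖x‖ * ‖y‖)) := by
  have hxy : ‖x‖ * ‖y‖ ≠ 0 := mul_ne_zero (norm_ne_zero_iff.mpr hx) (norm_ne_zero_iff.mpr hy)
  rw [norm_sub_sq_real, real_inner_smul_left, real_inner_smul_right, norm_smul, norm_smul,
    Real.norm_eq_abs, Real.norm_eq_abs, mul_pow, mul_pow, sq_abs, sq_abs]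
  field_simp
  ring

theorem norm_sub_sq_eq_of_ne_zero {x y : E} (hx : x ≠ 0) (hy : y ≠ 0) :
    ‖x - y‖ ^ 2 = (‖x‖ - ‖y‖) ^ 2 + 2 * ‖x‖ * ‖y‖ * (1 - ⟪x, y⟫ / (‖x‖ * ‖y‖)) := by
  simpa using norm_smul_sub_smul_sq hx hy 1 1

end InnerProductSpace

theorem norm_Fmap_sub_Fmap_sq {ε : ℝ} {x y : EuclideanSpace ℝ (Fin 2)} (hx : x ≠ 0)
    (hy : y ≠ 0) :
    ‖Fmap ε x - Fmap ε y‖ ^ 2 = (‖x‖ - ‖y‖) ^ 2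
      + 2 * (‖x‖ - ε) * (‖y‖ - ε) * (1 - ⟪x, y⟫ / (‖x‖ * ‖y‖)) := by
  have hrad : ∀ z : EuclideanSpace ℝ (Fin 2), z ≠ 0 → (‖z‖ - ε) / ‖z‖ * ‖z‖ = ‖z‖ - ε :=
    fun z hz => div_mul_cancel₀ _ (norm_ne_zero_iff.mpr hz)
  rw [Fmap, Fmap, norm_smul_sub_smul_sq hx hy, hrad x hx, hrad y hy]
  ring

theorem sq_sub_add_mul_le_eight_mul {a b ε k : ℝ} (hε : 0 ≤ ε) (hab : 8 * ε ≤ a + b)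
    (hk₀ : 0 ≤ k) (hk : k ≤ 1 / 4) :
    (a - b) ^ 2 + 2 * a * b * k ≤ 8 * ((a - b) ^ 2 + 2 * (a - ε) * (b - ε) * k) := by
  have hgap : a * b - 8 * (a - ε) * (b - ε) ≤ 14 * (a - b) ^ 2 := by
    nlinarith [sq_nonneg (a - b)]
  rcases le_total (a * b - 8 * (a - ε) * (b - ε)) 0 with hneg | hpos
  · nlinarith [mul_nonneg hk₀ (neg_nonneg.mpr hneg), sq_nonneg (a - b)]
  · nlinarith [mul_le_mul_of_nonneg_right hk hpos]

/-- If `|x|, |y| ≥ ε`, `⟨x, y⟩/(|x|·|y|) > 3/4` and `|x| + |y| ≥ 8ε`,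
then `ρ(x, y)² ≤ 8·‖F_ε(x) − F_ε(y)‖²`, where
`ρ(x, y) = min(|x − y|, (|x| − ε) + (|y| − ε))`. -/
theorem rho_sq_le_of_cos_gt_far (ε : ℝ) (hε : 0 < ε)
    (x y : EuclideanSpace ℝ (Fin 2)) (hx : ε ≤ ‖x‖) (hy : ε ≤ ‖y‖)
    (hcos : 3 / 4 < ⟪x, y⟫ / (‖x‖ * ‖y‖)) (hfar : 8 * ε ≤ ‖x‖ + ‖y‖) :
    (min ‖x - y‖ ((‖x‖ - ε) + (‖y‖ - ε))) ^ 2 ≤ 8 * ‖Fmap ε x - Fmap ε y‖ ^ 2 := by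
  have hx₀ : x ≠ 0 := norm_pos_iff.mp (hε.trans_le hx)
  have hy₀ : y ≠ 0 := norm_pos_iff.mp (hε.trans_le hy)
  have hcos_le : ⟪x, y⟫ / (‖x‖ * ‖y‖) ≤ 1 := div_le_one_of_le₀ (real_inner_le_norm x y)
    (by positivity)
  calc (min ‖x - y‖ ((‖x‖ - ε) + (‖y‖ - ε))) ^ 2
      ≤ ‖x - y‖ ^ 2 := pow_le_pow_left₀ (le_min (norm_nonneg _) (by linarith))
        (min_le_left _ _) 2
    _ ≤ 8 * ‖Fmap ε x - Fmap ε y‖ ^ 2 := by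
      rw [norm_sub_sq_eq_of_ne_zero hx₀ hy₀, norm_Fmap_sub_Fmap_sq hx₀ hy₀]
      exact sq_sub_add_mul_le_eight_mul hε.le hfar (by linarith) (by linarith)
end

section
/- Let ε > 0. There exists a constant c > 0, depending only on ε, such that for all x, y ∈ ℝ² with |x| ≥ ε, |y| ≥ ε, ⟨x, y⟩/(|x|·|y|) > 3/4 and |x| + |y| ≤ 8ε (where ⟨·,·⟩ is the Euclidean inner product), one has ‖F_ε(x) − F_ε(y)‖² ≥ c·ρ(x, y)⁴. -/
open scoped RealInnerProductSpace

/-! Write `x = r u`, `y = s v` with `u`, `v` unit vectors and `d = ‖u - v‖² ≤ 4`. Then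
`‖x - y‖² = (r - s)² + r s d` while `‖F_ε x - F_ε y‖² = (r - s)² + (r - ε)(s - ε) d`: `F_ε` keeps the
radial part of the displacement and shrinks only the angular part. On the bounded region
`r + s ≤ 8ε` this loss is compensated by the factor `((r - ε) + (s - ε))² ≥ ρ²`, which gives
`ρ⁴ ≤ ((r - ε) + (s - ε))² ‖x - y‖² ≤ 100 ε² ‖F_ε x - F_ε y‖²`. -/

theorem norm_smul_sub_smul_sq_of_norm_eq_one {E : Type*} [NormedAddCommGroup E]
    [InnerProductSpace ℝ E] {u v : E} (hu : ‖u‖ = 1) (hv : ‖v‖ = 1)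
    (α β : ℝ) : ‖α • u - β • v‖ ^ 2 = (α - β) ^ 2 + α * β * ‖u - v‖ ^ 2 := by
  rw [norm_sub_sq_real, norm_sub_sq_real, norm_smul, norm_smul, real_inner_smul_left,
    real_inner_smul_right, hu, hv, Real.norm_eq_abs, Real.norm_eq_abs, mul_pow, mul_pow, sq_abs,
    sq_abs]
  ring

theorem norm_sub_sq_le_four_of_norm_eq_one {E : Type*} [SeminormedAddGroup E] {u v : E}
    (hu : ‖u‖ = 1) (hv : ‖v‖ = 1) : ‖u - v‖ ^ 2 ≤ 4 := by
  have : ‖u - v‖ ≤ 2 := by linarith [norm_sub_le u v]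
  nlinarith [norm_nonneg (u - v)]

theorem Fmap_eq_smul_normalize (ε : ℝ) (x : EuclideanSpace ℝ (Fin 2)) :
    Fmap ε x = (‖x‖ - ε) • (‖x‖⁻¹ • x) := by
  rw [Fmap, smul_smul, div_eq_mul_inv]

theorem min_pow_four_le_sq_mul_sq {p q : ℝ} (hp : 0 ≤ p) (hq : 0 ≤ q) :
    min p q ^ 4 ≤ p ^ 2 * q ^ 2 := by
  have hmin : min p q ^ 2 ≤ p * q := by
    rw [sq]
    exact mul_le_mul (min_le_left p q) (min_le_right p q) (le_min hp hq) hp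
  calc min p q ^ 4 = (min p q ^ 2) ^ 2 := by ring
    _ ≤ (p * q) ^ 2 := by gcongr
    _ = p ^ 2 * q ^ 2 := mul_pow p q 2

theorem sub_add_sub_sq_mul_le {ε r s d : ℝ} (hr : ε ≤ r) (hs : ε ≤ s) (hsum : r + s ≤ 8 * ε)
    (hd₀ : 0 ≤ d) (hd₄ : d ≤ 4) :
    ((r - ε) + (s - ε)) ^ 2 * ((r - s) ^ 2 + r * s * d) ≤
      100 * ε ^ 2 * ((r - s) ^ 2 + (r - ε) * (s - ε) * d) := by
  have hab : ((r - ε) + (s - ε)) ^ 2 ≤ 36 * ε ^ 2 := by nlinarith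
  have hrs : r * s ≤ 16 * ε ^ 2 := by nlinarith [sq_nonneg (r - s)]
  -- `((r - ε) + (s - ε))² = (r - s)² + 4 (r - ε)(s - ε)` and `d ≤ 4`
  have hangle : ((r - ε) + (s - ε)) ^ 2 * d ≤ 4 * (r - s) ^ 2 + 4 * ((r - ε) * (s - ε) * d) := by
    nlinarith [sq_nonneg (r - s)]
  have hab_d : 0 ≤ (r - ε) * (s - ε) * d :=
    mul_nonneg (mul_nonneg (sub_nonneg.mpr hr) (sub_nonneg.mpr hs)) hd₀
  calc ((r - ε) + (s - ε)) ^ 2 * ((r - s) ^ 2 + r * s * d)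
      = ((r - ε) + (s - ε)) ^ 2 * (r - s) ^ 2 + r * s * (((r - ε) + (s - ε)) ^ 2 * d) := by ring
    _ ≤ 36 * ε ^ 2 * (r - s) ^ 2 + 16 * ε ^ 2 * (4 * (r - s) ^ 2 + 4 * ((r - ε) * (s - ε) * d)) := by
        gcongr
    _ ≤ 100 * ε ^ 2 * ((r - s) ^ 2 + (r - ε) * (s - ε) * d) := by nlinarith

/-- There is a constant `c > 0`, depending only on `ε`, such that for
all `x, y` with `|x|, |y| ≥ ε`, `⟨x, y⟩/(|x|·|y|) > 3/4` and `|x| + |y| ≤ 8ε`, one has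
`‖F_ε(x) − F_ε(y)‖² ≥ c·ρ(x, y)⁴`, where
`ρ(x, y) = min(|x − y|, (|x| − ε) + (|y| − ε))`. -/
theorem Fmap_diff_sq_ge_of_cos_gt_near (ε : ℝ) (hε : 0 < ε) :
    ∃ c > (0 : ℝ), ∀ x y : EuclideanSpace ℝ (Fin 2),
      ε ≤ ‖x‖ → ε ≤ ‖y‖ → 3 / 4 < ⟪x, y⟫ / (‖x‖ * ‖y‖) → ‖x‖ + ‖y‖ ≤ 8 * ε →
        c * (min ‖x - y‖ ((‖x‖ - ε) + (‖y‖ - ε))) ^ 4 ≤ ‖Fmap ε x - Fmap ε y‖ ^ 2 := by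
  refine ⟨(100 * ε ^ 2)⁻¹, by positivity, fun x y hx hy _ hsum => ?_⟩
  have hx₀ : ‖x‖ ≠ 0 := (hε.trans_le hx).ne'
  have hy₀ : ‖y‖ ≠ 0 := (hε.trans_le hy).ne'
  have hu : ‖‖x‖⁻¹ • x‖ = 1 := by rw [norm_smul, norm_inv, norm_norm, inv_mul_cancel₀ hx₀]
  have hv : ‖‖y‖⁻¹ • y‖ = 1 := by rw [norm_smul, norm_inv, norm_norm, inv_mul_cancel₀ hy₀]
  have hdist : ‖x - y‖ ^ 2 = (‖x‖ - ‖y‖) ^ 2 + ‖x‖ * ‖y‖ * ‖‖x‖⁻¹ • x - ‖y‖⁻¹ • y‖ ^ 2 := by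
    rw [← norm_smul_sub_smul_sq_of_norm_eq_one hu hv, smul_inv_smul₀ hx₀, smul_inv_smul₀ hy₀]
  have hFdist : ‖Fmap ε x - Fmap ε y‖ ^ 2 = (‖x‖ - ‖y‖) ^ 2 +
      (‖x‖ - ε) * (‖y‖ - ε) * ‖‖x‖⁻¹ • x - ‖y‖⁻¹ • y‖ ^ 2 := by
    rw [Fmap_eq_smul_normalize, Fmap_eq_smul_normalize, norm_smul_sub_smul_sq_of_norm_eq_one hu hv]
    ring
  have hρ := min_pow_four_le_sq_mul_sq (norm_nonneg (x - y))
    (by linarith : 0 ≤ (‖x‖ - ε) + (‖y‖ - ε))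
  have hbound := sub_add_sub_sq_mul_le hx hy hsum (sq_nonneg _)
    (norm_sub_sq_le_four_of_norm_eq_one hu hv)
  rw [← hdist, ← hFdist] at hbound
  rw [inv_mul_le_iff₀ (by positivity)]
  exact (hρ.trans_eq (mul_comm _ _)).trans hbound
end

section
/- Let (S, d) be a metric space, let g : S → ℝ be bounded and continuous, let T > 0 and 0 ≤ t₁ < t₂ ≤ T. Let ω : [0, T] → S and ω_n : [0, T] → S (n ∈ ℕ) all be right-continuous with left limits. Suppose there exist increasing homeomorphisms λ_n : [0, T] → [0, T] such that sup_{t ∈ [0,T]} |λ_n(t) − t| → 0 and sup_{t ∈ [0,T]} d(ω_n(t), ω(λ_n(t))) → 0 as n → ∞. Then ∫_{t₁}^{t₂} g(ω_n(s)) ds → ∫_{t₁}^{t₂} g(ω(s)) ds as n → ∞. -/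
/-!
A path with left limits has only countably many jumps: the jumps of size `> ε` are isolated
from the left among themselves, since near a jump the left limit pins all values of the path
within `ε / 2` of each other. So almost every `s ∈ (t₁, t₂]` is a continuity point of `ω`, and
there `ωₙ(s)` is uniformly close to `ω(λₙ(s))` with `λₙ(s) → s`, hence `ωₙ(s) → ω(s)`. The same
countability makes every `g ∘ ωₙ` measurable, and dominated convergence with the bound `sup |g|`
concludes.
-/

open Filter Set MeasureTheory Topology

section LeftJumps

variable {α X : Type*} [LinearOrder α] [TopologicalSpace α] [OrderTopology α]
  [DenselyOrdered α] [NoMinOrder α] [MetricSpace X] {f : α → X}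

theorem nhdsWithin_setOf_leftJump_gt_eq_bot {ε : ℝ} (hε : 0 < ε) {x : α} {L : X}
    (hL : Tendsto f (𝓝[<] x) (𝓝 L)) :
    𝓝[{y | ∃ L', Tendsto f (𝓝[<] y) (𝓝 L') ∧ ε < dist L' (f y)} ∩ Iio x] x = ⊥ := by
  obtain ⟨a, hax, ha⟩ : ∃ a ∈ Iio x, Ioo a x ⊆ {u | dist (f u) L < ε / 2} :=
    mem_nhdsLT_iff_exists_Ioo_subset.1 (hL (Metric.ball_mem_nhds L (half_pos hε)))
  have hno_jump : ∀ u ∈ Ioo a x, ∀ L', Tendsto f (𝓝[<] u) (𝓝 L') → dist L' (f u) ≤ ε := by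
    intro u hu L' hL'
    have hL'L : dist L' L ≤ ε / 2 :=
      le_of_tendsto (hL'.dist tendsto_const_nhds) <|
        mem_of_superset (Ioo_mem_nhdsLT hu.1) fun v hv =>
          show dist (f v) L ≤ ε / 2 from le_of_lt (ha ⟨hv.1, hv.2.trans hu.2⟩)
    calc dist L' (f u) ≤ dist L' L + dist (f u) L := dist_triangle_right _ _ _
      _ ≤ ε / 2 + ε / 2 := add_le_add hL'L (ha hu).le
      _ = ε := add_halves ε
  rw [← empty_mem_iff_bot]
  refine mem_of_superset (inter_mem self_mem_nhdsWithin
    (nhdsWithin_mono _ inter_subset_right (Ioo_mem_nhdsLT hax))) ?_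
  rintro u ⟨⟨⟨L', hL', hjump⟩, -⟩, hu⟩
  exact absurd (hno_jump u hu L' hL') hjump.not_ge

variable [SecondCountableTopology α]

theorem countable_setOf_leftLim_ne :
    {x | ∃ L ≠ f x, Tendsto f (𝓝[<] x) (𝓝 L)}.Countable := by
  set J : ℝ → Set α := fun ε => {y | ∃ L, Tendsto f (𝓝[<] y) (𝓝 L) ∧ ε < dist L (f y)}
  have hJ : ∀ ε > 0, (J ε).Countable := fun ε hε =>
    (countable_setOfPred_isolated_left_within (s := J ε)).mono fun x hx =>
      show x ∈ J ε ∧ _ from ⟨hx, nhdsWithin_setOf_leftJump_gt_eq_bot hε hx.choose_spec.1⟩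
  refine (countable_iUnion fun n : ℕ => hJ _ (Nat.one_div_pos_of_nat (n := n))).mono ?_
  rintro x ⟨L, hne, hL⟩
  obtain ⟨n, hn⟩ := exists_nat_one_div_lt (dist_pos.2 hne)
  exact mem_iUnion.2 ⟨n, L, hL, hn⟩

theorem countable_not_continuousAt_of_rightCont_of_leftLim {s : Set α}
    (hrc : ∀ x ∈ s, Tendsto f (𝓝[≥] x) (𝓝 (f x)))
    (hll : ∀ x ∈ s, ∃ L, Tendsto f (𝓝[<] x) (𝓝 L)) :
    {x ∈ s | ¬ContinuousAt f x}.Countable :=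
  countable_setOf_leftLim_ne.mono fun x ⟨hx, hdisc⟩ => by
    obtain ⟨L, hL⟩ := hll x hx
    refine ⟨L, fun hLx => hdisc ?_, hL⟩
    subst hLx
    exact continuousAt_iff_continuous_left_right.2
      ⟨continuousWithinAt_Iio_iff_Iic.1 hL, hrc x hx⟩

end LeftJumps

section CountablyManyDiscontinuities

variable {α β : Type*} [MeasurableSpace α] {μ : Measure α} [NullSingletonClass μ] {s : Set α}

theorem ae_restrict_of_countable_not {p : α → Prop} (hs : MeasurableSet s)
    (hp : {x ∈ s | ¬p x}.Countable) : ∀ᵐ x ∂μ.restrict s, p x := by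
  rw [ae_restrict_iff' hs, ae_iff]
  simpa only [Classical.not_imp] using hp.measure_zero μ

theorem aestronglyMeasurable_restrict_of_countable_not_continuousAt [TopologicalSpace α]
    [OpensMeasurableSpace α] [MeasurableSingletonClass α] [TopologicalSpace β]
    [TopologicalSpace.PseudoMetrizableSpace β] [SecondCountableTopologyEither α β] {F : α → β}
    (hs : MeasurableSet s) (hF : {x ∈ s | ¬ContinuousAt F x}.Countable) :
    AEStronglyMeasurable F (μ.restrict s) := by
  have hcont : ContinuousOn F (s \ {x ∈ s | ¬ContinuousAt F x}) := fun x hx =>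
    (not_not.1 fun h => hx.2 ⟨hx.1, h⟩).continuousWithinAt
  rw [← Measure.restrict_congr_set (sdiff_null_ae_eq_self (hF.measure_zero μ))]
  exact hcont.aestronglyMeasurable (hs.diff hF.measurableSet)

end CountablyManyDiscontinuities

theorem countable_Ioc_not_continuousAt_of_cadlag {X : Type*} [MetricSpace X] {f : ℝ → X}
    {T : ℝ} (hrc : ∀ t ∈ Ico 0 T, Tendsto f (𝓝[≥] t) (𝓝 (f t)))
    (hll : ∀ t ∈ Ioc 0 T, ∃ L, Tendsto f (𝓝[<] t) (𝓝 L)) :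
    {t ∈ Ioc 0 T | ¬ContinuousAt f t}.Countable := by
  have hinterior : {t ∈ Ioo 0 T | ¬ContinuousAt f t}.Countable :=
    countable_not_continuousAt_of_rightCont_of_leftLim
      (fun t ht => hrc t (Ioo_subset_Ico_self ht)) fun t ht => hll t (Ioo_subset_Ioc_self ht)
  refine (hinterior.insert T).mono fun t ⟨ht, hdisc⟩ => ?_
  rcases ht.2.eq_or_lt with rfl | hlt
  · exact mem_insert _ _
  · exact Or.inr ⟨⟨ht.1, hlt⟩, hdisc⟩

theorem integral_skorokhod_continuous_general {S : Type*} [MetricSpace S]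
    (g : S → ℝ) (hg_cont : Continuous g) (hg_bdd : ∃ M : ℝ, ∀ s : S, |g s| ≤ M)
    (T t₁ t₂ : ℝ) (ht₁ : 0 ≤ t₁) (ht₁₂ : t₁ < t₂) (ht₂ : t₂ ≤ T)
    (ω : ℝ → S) (ωn : ℕ → ℝ → S)
    (hω_rc : ∀ t ∈ Ico 0 T, Tendsto ω (nhdsWithin t (Ici t)) (nhds (ω t)))
    (hω_ll : ∀ t ∈ Ioc 0 T, ∃ L : S, Tendsto ω (nhdsWithin t (Iio t)) (nhds L))
    (hωn_rc : ∀ n, ∀ t ∈ Ico 0 T, Tendsto (ωn n) (nhdsWithin t (Ici t)) (nhds (ωn n t)))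
    (hωn_ll : ∀ n, ∀ t ∈ Ioc 0 T, ∃ L : S, Tendsto (ωn n) (nhdsWithin t (Iio t)) (nhds L))
    (l : ℕ → ℝ → ℝ)
    (hl_conv : ∀ δ > (0 : ℝ), ∀ᶠ n in atTop, ∀ t ∈ Icc 0 T, |l n t - t| < δ)
    (hω_conv : ∀ δ > (0 : ℝ), ∀ᶠ n in atTop, ∀ t ∈ Icc 0 T, dist (ωn n t) (ω (l n t)) < δ) :
    Tendsto (fun n => ∫ s in t₁..t₂, g (ωn n s)) atTop (nhds (∫ s in t₁..t₂, g (ω s))) := by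
  obtain ⟨M, hM⟩ := hg_bdd
  have hsub : Ioc t₁ t₂ ⊆ Ioc 0 T := Ioc_subset_Ioc ht₁ ht₂
  have hmeas (n : ℕ) :
      AEStronglyMeasurable (fun s => g (ωn n s)) (volume.restrict (Ioc t₁ t₂)) := by
    refine aestronglyMeasurable_restrict_of_countable_not_continuousAt measurableSet_Ioc <|
      (countable_Ioc_not_continuousAt_of_cadlag (hωn_rc n) (hωn_ll n)).mono ?_
    rintro t ⟨ht, hdisc⟩
    exact ⟨hsub ht, fun hc => hdisc (hg_cont.continuousAt.comp hc)⟩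
  have hcont : ∀ᵐ s ∂volume.restrict (Ioc t₁ t₂), ContinuousAt ω s := by
    refine ae_restrict_of_countable_not measurableSet_Ioc <|
      (countable_Ioc_not_continuousAt_of_cadlag hω_rc hω_ll).mono ?_
    rintro t ⟨ht, hdisc⟩
    exact ⟨hsub ht, hdisc⟩
  have hlim : ∀ᵐ s ∂volume.restrict (Ioc t₁ t₂),
      Tendsto (fun n => g (ωn n s)) atTop (𝓝 (g (ω s))) := by
    filter_upwards [hcont, ae_restrict_mem measurableSet_Ioc] with t hc ht
    have htT : t ∈ Icc 0 T := Ioc_subset_Icc_self (hsub ht)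
    have htime : Tendsto (fun n => l n t) atTop (𝓝 t) := Metric.tendsto_nhds.2 fun δ hδ =>
      (hl_conv δ hδ).mono fun n h => by simpa only [Real.dist_eq] using h t htT
    have hpath : Tendsto (fun n => dist (ω (l n t)) (ωn n t)) atTop (𝓝 0) :=
      Metric.tendsto_nhds.2 fun δ hδ => (hω_conv δ hδ).mono fun n h => by
        simpa [dist_comm] using h t htT
    exact (hg_cont.tendsto _).comp ((hc.tendsto.comp htime).congr_dist hpath)
  simp only [intervalIntegral.integral_of_le ht₁₂.le]
  exact tendsto_integral_of_dominated_convergence (fun _ => M) hmeas (integrableOn_const (by simp))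
    (fun n => ae_of_all _ fun s => (Real.norm_eq_abs _).trans_le (hM _)) hlim

/-- Skorokhod continuity of `ω ↦ ∫_{t₁}^{t₂} g(ω(s)) ds`: if càdlàg
paths `ω_n : [0,T] → S` converge to a càdlàg path `ω` in the Skorokhod sense (there are
increasing homeomorphisms `λ_n` of `[0,T]` with `sup |λ_n(t) − t| → 0` and
`sup d(ω_n(t), ω(λ_n(t))) → 0`), then for any bounded continuous `g : S → ℝ` and
`0 ≤ t₁ < t₂ ≤ T`, `∫_{t₁}^{t₂} g(ω_n(s)) ds → ∫_{t₁}^{t₂} g(ω(s)) ds`. -/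
theorem integral_skorokhod_continuous {S : Type*} [MetricSpace S]
    (g : S → ℝ) (hg_cont : Continuous g) (hg_bdd : ∃ M : ℝ, ∀ s : S, |g s| ≤ M)
    (T t₁ t₂ : ℝ) (hT : 0 < T) (ht₁ : 0 ≤ t₁) (ht₁₂ : t₁ < t₂) (ht₂ : t₂ ≤ T)
    (ω : ℝ → S) (ωn : ℕ → ℝ → S)
    (hω_rc : ∀ t ∈ Ico 0 T, Tendsto ω (nhdsWithin t (Ici t)) (nhds (ω t)))
    (hω_ll : ∀ t ∈ Ioc 0 T, ∃ L : S, Tendsto ω (nhdsWithin t (Iio t)) (nhds L))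
    (hωn_rc : ∀ n, ∀ t ∈ Ico 0 T, Tendsto (ωn n) (nhdsWithin t (Ici t)) (nhds (ωn n t)))
    (hωn_ll : ∀ n, ∀ t ∈ Ioc 0 T, ∃ L : S, Tendsto (ωn n) (nhdsWithin t (Iio t)) (nhds L))
    (l : ℕ → ℝ → ℝ)
    (hl_cont : ∀ n, ContinuousOn (l n) (Icc 0 T))
    (hl_mono : ∀ n, StrictMonoOn (l n) (Icc 0 T))
    (hl_zero : ∀ n, l n 0 = 0) (hl_T : ∀ n, l n T = T)
    (hl_conv : ∀ δ > (0 : ℝ), ∀ᶠ n in atTop, ∀ t ∈ Icc 0 T, |l n t - t| < δ)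
    (hω_conv : ∀ δ > (0 : ℝ), ∀ᶠ n in atTop, ∀ t ∈ Icc 0 T, dist (ωn n t) (ω (l n t)) < δ) :
    Tendsto (fun n => ∫ s in t₁..t₂, g (ωn n s)) atTop (nhds (∫ s in t₁..t₂, g (ω s))) :=
  integral_skorokhod_continuous_general g hg_cont hg_bdd T t₁ t₂ ht₁ ht₁₂ ht₂ ω ωn hω_rc hω_ll
    hωn_rc hωn_ll l hl_conv hω_conv
end
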